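/- arXiv:1512.04170 — 7 statements merged into one kernel-verified Lean document; each statement's English description precedes it below -/
import Mathlib

section
/- Let x₁,…,xₙ be points in ℝᵈ satisfying the ℓ₂² triangle inequalities, i.e., ‖xᵢ−xⱼ‖² + ‖xⱼ−xₖ‖² ≥ ‖xᵢ−xₖ‖² for all i,j,k. Then for all i,j,k,l, |⟨xᵢ−xⱼ, xₖ−xₗ⟩| ≤ ‖xᵢ−xⱼ‖². -/
open scoped RealInnerProductSpace

lemma key_polar {E : Type*} [NormedAddCommGroup E] [InnerProductSpace ℝ E]
    (a b c d : E) :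
    2 * ⟪a - b, c - d⟫ = ‖a - d‖ ^ 2 + ‖b - c‖ ^ 2 - ‖a - c‖ ^ 2 - ‖b - d‖ ^ 2 := by
  simp only [norm_sub_sq_real, inner_sub_left, inner_sub_right]
  ring

/-- Key lemma: for points satisfying the ℓ₂² triangle inequalities,
`|⟨xᵢ−xⱼ, xₖ−xₗ⟩| ≤ ‖xᵢ−xⱼ‖²`. -/
theorem stmt0 (n d : ℕ) (x : Fin n → EuclideanSpace ℝ (Fin d))
    (htri : ∀ i j k, ‖x i - x j‖ ^ 2 + ‖x j - x k‖ ^ 2 ≥ ‖x i - x k‖ ^ 2) :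
    ∀ i j k l, |⟪x i - x j, x k - x l⟫| ≤ ‖x i - x j‖ ^ 2 := by
  intro i j k l
  rw [abs_le]
  have h1 := key_polar (x i) (x j) (x k) (x l)
  have h2 := key_polar (x i) (x j) (x l) (x k)
  have t1 := htri i j l
  have t2 := htri j i k
  have t3 := htri i j k
  have t4 := htri j i l
  have e1 : ‖x j - x i‖ = ‖x i - x j‖ := norm_sub_rev _ _
  rw [e1] at t2 t4
  constructor <;> nlinarith [sq_nonneg ‖x i - x j‖]
end

section
/- Let x₁,…,xₙ ∈ ℝᵈ satisfy the ℓ₂² triangle inequalities, and suppose xₖ−xₗ is a nonzero vector for some k,l. Then ⟨xᵢ−xⱼ, (xₖ−xₗ)/‖xₖ−xₗ‖⟩² ≤ |⟨xᵢ−xⱼ, xₖ−xₗ⟩| for all i,j. -/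
open scoped RealInnerProductSpace

theorem stmt1 (n d : ℕ) (x : Fin n → EuclideanSpace ℝ (Fin d))
    (htri : ∀ i j k, ‖x i - x j‖ ^ 2 + ‖x j - x k‖ ^ 2 ≥ ‖x i - x k‖ ^ 2)
    (k l : Fin n) (hkl : x k ≠ x l) :
    ∀ i j, ⟪x i - x j, ‖x k - x l‖⁻¹ • (x k - x l)⟫ ^ 2 ≤ |⟪x i - x j, x k - x l⟫| := by
  intro i j
  set v := x k - x l with hv
  have hvpos : (0:ℝ) < ‖v‖ := by
    rw [norm_pos_iff]; exact sub_ne_zero.mpr hkl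
  have key : ∀ p, 0 ≤ ⟪x p - x l, v⟫ ∧ ⟪x p - x l, v⟫ ≤ ‖v‖ ^ 2 := by
    intro p
    have h1 := htri p l k
    have h2 := htri p k l
    have e1 : x p - x k = (x p - x l) + (x l - x k) := by abel
    have n1 := norm_add_sq_real (x p - x l) (x l - x k)
    rw [← e1] at n1
    have hneg : x l - x k = -v := by rw [hv]; abel
    have i1 : ⟪x p - x l, x l - x k⟫ = -⟪x p - x l, v⟫ := by
      rw [hneg, inner_neg_right]
    have nlk : ‖x l - x k‖ = ‖v‖ := by rw [hneg, norm_neg]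
    rw [i1, nlk] at n1
    constructor
    · nlinarith [n1, h1]
    · have e2 : x p - x l = (x p - x k) + v := by rw [hv]; abel
      have n2 := norm_add_sq_real (x p - x k) v
      rw [← e2] at n2
      have isplit : ⟪x p - x l, v⟫ = ⟪x p - x k, v⟫ + ⟪v, v⟫ := by
        rw [e2, inner_add_left]
      have hvv : ⟪v, v⟫ = ‖v‖ ^ 2 := real_inner_self_eq_norm_sq v
      nlinarith [n2, h2, isplit, hvv]
  have hsplit : ⟪x i - x j, v⟫ = ⟪x i - x l, v⟫ - ⟪x j - x l, v⟫ := by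
    have e : x i - x j = (x i - x l) - (x j - x l) := by abel
    rw [e, inner_sub_left]
  have hi := key i
  have hj := key j
  have habs : |⟪x i - x j, v⟫| ≤ ‖v‖ ^ 2 := by
    rw [abs_le]; constructor <;> [nlinarith [hsplit, hi.1, hj.2]; nlinarith [hsplit, hi.2, hj.1]]
  rw [real_inner_smul_right]
  set t := ⟪x i - x j, v⟫ with ht
  have h1 : |t| * |t| ≤ |t| * ‖v‖ ^ 2 := by
    exact mul_le_mul_of_nonneg_left habs (abs_nonneg t)
  have hne : ‖v‖ ≠ 0 := ne_of_gt hvpos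
  have hc : ‖v‖ * ‖v‖⁻¹ = 1 := mul_inv_cancel₀ hne
  calc (‖v‖⁻¹ * t) ^ 2 = (|t| * |t|) * (‖v‖⁻¹) ^ 2 := by
        rw [mul_pow]; rw [show |t| * |t| = |t| ^ 2 from (sq (|t|)) ▸ rfl, sq_abs]; ring
    _ ≤ (|t| * ‖v‖ ^ 2) * (‖v‖⁻¹) ^ 2 := by
        exact mul_le_mul_of_nonneg_right h1 (sq_nonneg _)
    _ = |t| * (‖v‖ * ‖v‖⁻¹) ^ 2 := by ring
    _ = |t| := by rw [hc]; ring
end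

section
/- Let x₁,…,xₙ ∈ ℝᵈ satisfy the ℓ₂² triangle inequalities. Let p be a probability distribution on pairs {(k,l) : k<l}, and let P = Σ_{k<l} p_{kl} (xₖ−xₗ)(xₖ−xₗ)ᵀ (a symmetric positive semidefinite d×d matrix). Then the map xᵢ ↦ P^{1/2} xᵢ is a contraction from the ℓ₂² metric into ℓ₂: for all i,j, ‖P^{1/2}(xᵢ−xⱼ)‖ ≤ ‖xᵢ−xⱼ‖². -/
/-!
With `d(i, j) = ‖xᵢ - xⱼ‖²`, polarization gives
`2 ⟨xₖ - xₗ, xᵢ - xⱼ⟩ = d(i, l) + d(j, k) - d(i, k) - d(j, l)`, and two triangle inequalities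
through `i` and `j` bound this by `± 2 d(i, j)`. Hence for `v = xᵢ - xⱼ`,
`‖P^{1/2} v‖² = vᵀ P v = Σ p_{kl} ⟨xₖ - xₗ, v⟩² ≤ d(i, j)²`.
-/

open Matrix

open scoped ComplexOrder in
/-- The square root of a positive semidefinite matrix, as defined in the older Mathlib
(`Matrix.PosSemidef.sqrt`, since removed). -/
noncomputable def Matrix.PosSemidef.sqrt {n 𝕜 : Type*} [Fintype n] [DecidableEq n] [RCLike 𝕜]
    {A : Matrix n n 𝕜} (hA : A.PosSemidef) : Matrix n n 𝕜 :=
  (hA.1.eigenvectorUnitary : Matrix n n 𝕜) *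
    diagonal (((↑) : ℝ → 𝕜) ∘ Real.sqrt ∘ hA.1.eigenvalues) *
    (star hA.1.eigenvectorUnitary : Matrix n n 𝕜)

namespace Matrix.PosSemidef

variable {m 𝕜 : Type*} [Fintype m] [DecidableEq m] [RCLike 𝕜] {A : Matrix m m 𝕜}

open scoped ComplexOrder

theorem isHermitian_sqrt (hA : A.PosSemidef) : hA.sqrt.IsHermitian := by
  simp [Matrix.PosSemidef.sqrt, IsHermitian, conjTranspose_mul, star_eq_conjTranspose,
    diagonal_conjTranspose, Matrix.mul_assoc, Pi.star_def, Function.comp_def]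

theorem sqrt_mul_self (hA : A.PosSemidef) : hA.sqrt * hA.sqrt = A := by
  have hU : (star hA.1.eigenvectorUnitary : Matrix m m 𝕜) * hA.1.eigenvectorUnitary = 1 :=
    Unitary.coe_star_mul_self _
  conv_rhs => rw [hA.1.spectral_theorem, Unitary.conjStarAlgAut_apply]
  simp only [Matrix.PosSemidef.sqrt, Matrix.mul_assoc]
  rw [← Matrix.mul_assoc (star _ : Matrix m m 𝕜), hU, Matrix.one_mul,
    ← Matrix.mul_assoc (diagonal _), diagonal_mul_diagonal]
  congr 3
  funext k
  simp [← RCLike.ofReal_mul, Real.mul_self_sqrt (hA.eigenvalues_nonneg k)]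

end Matrix.PosSemidef

theorem Matrix.PosSemidef.sqrt_mulVec_dotProduct_self {m : Type*} [Fintype m] [DecidableEq m]
    {A : Matrix m m ℝ} (hA : A.PosSemidef) (v : m → ℝ) :
    hA.sqrt *ᵥ v ⬝ᵥ hA.sqrt *ᵥ v = v ⬝ᵥ A *ᵥ v := by
  have hT : hA.sqrtᵀ = hA.sqrt := by
    simpa [conjTranspose_eq_transpose_of_trivial] using hA.isHermitian_sqrt.eq
  conv_rhs => rw [← hA.sqrt_mul_self, ← mulVec_mulVec, dotProduct_mulVec, ← mulVec_transpose, hT]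

section DotProduct

variable {m : Type*} [Fintype m]

theorem two_mul_sub_dotProduct_sub {R : Type*} [CommRing R] (a b c e : m → R) :
    2 * ((a - b) ⬝ᵥ (c - e)) = (c - b) ⬝ᵥ (c - b) + (e - a) ⬝ᵥ (e - a)
      - (c - a) ⬝ᵥ (c - a) - (e - b) ⬝ᵥ (e - b) := by
  simp only [sub_dotProduct, dotProduct_sub, dotProduct_comm b, dotProduct_comm a c,
    dotProduct_comm a e]
  ring

theorem sub_dotProduct_sub_self_comm {R : Type*} [CommRing R] (a b : m → R) :
    (a - b) ⬝ᵥ (a - b) = (b - a) ⬝ᵥ (b - a) := by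
  rw [← neg_sub, neg_dotProduct, dotProduct_neg, neg_neg]

theorem abs_sub_dotProduct_le_of_triangle {ι : Type*} (x : ι → m → ℝ)
    (htri : ∀ i j k, (x i - x j) ⬝ᵥ (x i - x j) + (x j - x k) ⬝ᵥ (x j - x k) ≥
      (x i - x k) ⬝ᵥ (x i - x k))
    (i j k l : ι) : |(x k - x l) ⬝ᵥ (x i - x j)| ≤ (x i - x j) ⬝ᵥ (x i - x j) := by
  have hpol := two_mul_sub_dotProduct_sub (x k) (x l) (x i) (x j)
  have hji := sub_dotProduct_sub_self_comm (x j) (x i)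
  have hijl := htri i j l
  have hjik := htri j i k
  have hijk := htri i j k
  have hjil := htri j i l
  exact abs_le.mpr ⟨by linarith, by linarith⟩

theorem dotProduct_sum_smul_vecMulVec_self_mulVec {ι R : Type*} [CommRing R]
    (s : Finset ι) (c : ι → R) (w : ι → m → R) (v : m → R) :
    v ⬝ᵥ (∑ q ∈ s, c q • vecMulVec (w q) (w q)) *ᵥ v = ∑ q ∈ s, c q * (w q ⬝ᵥ v) ^ 2 := by
  simp only [sum_mulVec, dotProduct_sum, smul_mulVec, dotProduct_smul, vecMulVec_mulVec,
    op_smul_eq_smul, smul_eq_mul, dotProduct_comm v (w _), sq]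

end DotProduct

/-- Contraction lemma: with `P = Σ_{k<l} p_{kl} (xₖ−xₗ)(xₖ−xₗ)ᵀ` for a probability
distribution `p` on pairs, the map `xᵢ ↦ P^{1/2} xᵢ` is a contraction of ℓ₂² into ℓ₂. -/
theorem stmt2 (n d : ℕ) (x : Fin n → Fin d → ℝ)
    (htri : ∀ i j k, (x i - x j) ⬝ᵥ (x i - x j) + (x j - x k) ⬝ᵥ (x j - x k) ≥
      (x i - x k) ⬝ᵥ (x i - x k))
    (p : Fin n → Fin n → ℝ) (hp : ∀ k l, 0 ≤ p k l)
    (hpsum : ∑ q : {q : Fin n × Fin n // q.1 < q.2}, p q.1.1 q.1.2 = 1)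
    (P : Matrix (Fin d) (Fin d) ℝ)
    (hPdef : P = ∑ q : {q : Fin n × Fin n // q.1 < q.2},
      p q.1.1 q.1.2 • vecMulVec (x q.1.1 - x q.1.2) (x q.1.1 - x q.1.2))
    (hP : P.PosSemidef) :
    ∀ i j, Real.sqrt (hP.sqrt.mulVec (x i - x j) ⬝ᵥ hP.sqrt.mulVec (x i - x j)) ≤
      (x i - x j) ⬝ᵥ (x i - x j) := by
  intro i j
  set v := x i - x j
  have hv : 0 ≤ v ⬝ᵥ v := Finset.sum_nonneg fun _ _ => mul_self_nonneg _
  rw [Real.sqrt_le_left hv, hP.sqrt_mulVec_dotProduct_self, hPdef,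
    dotProduct_sum_smul_vecMulVec_self_mulVec]
  calc ∑ q : {q : Fin n × Fin n // q.1 < q.2}, p q.1.1 q.1.2 * ((x q.1.1 - x q.1.2) ⬝ᵥ v) ^ 2
      ≤ ∑ q : {q : Fin n × Fin n // q.1 < q.2}, p q.1.1 q.1.2 * (v ⬝ᵥ v) ^ 2 := by
        refine Finset.sum_le_sum fun q _ => mul_le_mul_of_nonneg_left ?_ (hp _ _)
        exact sq_le_sq.mpr <| (abs_sub_dotProduct_le_of_triangle x htri i j _ _).trans
          (le_abs_self _)
    _ = (v ⬝ᵥ v) ^ 2 := by rw [← Finset.sum_mul, hpsum, one_mul]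
end

section
/- Let x₁,…,xₙ ∈ ℝᵈ satisfy the ℓ₂² triangle inequalities, let M be the d×C(n,2) matrix with columns {xᵢ−xⱼ}_{i<j}, with top singular value σ₁, top left singular vector u and top right singular vector v. Then the one-dimensional map xᵢ ↦ (σ₁/‖v‖₁)⟨xᵢ, u⟩ is a contraction: for all i,j, (σ₁/‖v‖₁)|⟨xᵢ−xⱼ, u⟩| ≤ ‖xᵢ−xⱼ‖². -/
open Matrix

/-- The one-dimensional map `xᵢ ↦ (σ₁/‖v‖₁)⟨xᵢ,u⟩` along the top singular direction of the
difference matrix is a contraction of the ℓ₂² metric. -/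
theorem stmt3 (n d : ℕ) (x : Fin n → Fin d → ℝ)
    (htri : ∀ i j k, (x i - x j) ⬝ᵥ (x i - x j) + (x j - x k) ⬝ᵥ (x j - x k) ≥
      (x i - x k) ⬝ᵥ (x i - x k))
    (M : Matrix (Fin d) {q : Fin n × Fin n // q.1 < q.2} ℝ)
    (hM : ∀ q t, M t q = x q.1.1 t - x q.1.2 t)
    (σ : ℝ) (u : Fin d → ℝ) (v : {q : Fin n × Fin n // q.1 < q.2} → ℝ)
    (hu : u ⬝ᵥ u = 1) (hv : v ⬝ᵥ v = 1)
    (hMv : M.mulVec v = σ • u) (huM : M.vecMul u = σ • v)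
    (htop : ∀ w, Real.sqrt (M.mulVec w ⬝ᵥ M.mulVec w) ≤ σ * Real.sqrt (w ⬝ᵥ w)) :
    ∀ i j, (σ / ∑ q, |v q|) * |(x i - x j) ⬝ᵥ u| ≤ (x i - x j) ⬝ᵥ (x i - x j) := by
  have hc : ∀ a b : Fin n, x a ⬝ᵥ x b = x b ⬝ᵥ x a := fun a b => dotProduct_comm _ _
  -- key contraction lemma from ℓ₂² triangle inequalities
  have key : ∀ i j k l : Fin n,
      |(x i - x j) ⬝ᵥ (x k - x l)| ≤ (x i - x j) ⬝ᵥ (x i - x j) := by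
    intro i j k l
    rw [abs_le]
    constructor
    · have h1 := htri i j k
      have h2 := htri j i l
      simp only [sub_dotProduct, dotProduct_sub, ge_iff_le] at h1 h2 ⊢
      linarith [hc i j, hc i k, hc i l, hc j k, hc j l, hc k l]
    · have h1 := htri i j l
      have h2 := htri j i k
      simp only [sub_dotProduct, dotProduct_sub, ge_iff_le] at h1 h2 ⊢
      linarith [hc i j, hc i k, hc i l, hc j k, hc j l, hc k l]
  intro i j
  set D := (x i - x j) ⬝ᵥ (x i - x j) with hD
  have hDnn : 0 ≤ D := by
    have : D = ∑ t, (x i t - x j t) * (x i t - x j t) := by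
      simp [hD, dotProduct]
    rw [this]
    exact Finset.sum_nonneg fun t _ => mul_self_nonneg _
  have hSnn : (0:ℝ) ≤ ∑ q, |v q| := Finset.sum_nonneg fun q _ => abs_nonneg _
  have hσ : 0 ≤ σ := by
    have := htop v
    rw [hv, Real.sqrt_one, mul_one] at this
    exact le_trans (Real.sqrt_nonneg _) this
  -- σ * ⟨x i - x j, u⟩ = ⟨x i - x j, M v⟩ = ∑ q v q ⟨x i - x j, column q⟩
  have hexp : σ * ((x i - x j) ⬝ᵥ u) = ∑ q, v q * ((x i - x j) ⬝ᵥ (x q.1.1 - x q.1.2)) := by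
    have h1 : (x i - x j) ⬝ᵥ M.mulVec v = σ * ((x i - x j) ⬝ᵥ u) := by
      rw [hMv, dotProduct_smul, smul_eq_mul]
    rw [← h1, dotProduct_mulVec]
    simp only [dotProduct]
    rw [Finset.sum_congr rfl]
    intro q _
    simp only [vecMul, dotProduct, hM, Pi.sub_apply, Finset.sum_mul]
    rw [Finset.mul_sum]
    congr 1
    ext t
    ring
  have hmain : σ * |(x i - x j) ⬝ᵥ u| ≤ (∑ q, |v q|) * D := by
    calc σ * |(x i - x j) ⬝ᵥ u| = |σ * ((x i - x j) ⬝ᵥ u)| := by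
          rw [abs_mul, abs_of_nonneg hσ]
      _ = |∑ q, v q * ((x i - x j) ⬝ᵥ (x q.1.1 - x q.1.2))| := by rw [hexp]
      _ ≤ ∑ q, |v q * ((x i - x j) ⬝ᵥ (x q.1.1 - x q.1.2))| := Finset.abs_sum_le_sum_abs _ _
      _ ≤ ∑ q, |v q| * D := by
          refine Finset.sum_le_sum fun q _ => ?_
          rw [abs_mul]
          exact mul_le_mul_of_nonneg_left (key i j q.1.1 q.1.2) (abs_nonneg _)
      _ = (∑ q, |v q|) * D := by rw [Finset.sum_mul]
  rcases eq_or_lt_of_le hSnn with hS0 | hSpos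
  · rw [← hS0, div_zero, zero_mul]
    exact hDnn
  · rw [div_mul_eq_mul_div, div_le_iff₀ hSpos]
    linarith [hmain]
end

section
/- Let x₁,…,xₙ ∈ ℝᵈ satisfy the ℓ₂² triangle inequalities, and let M be the matrix with columns {xᵢ−xⱼ}_{i<j}. Then there exists a map h : {x₁,…,xₙ} → ℝᵈ such that ‖h(xᵢ)−h(xⱼ)‖ ≤ ‖xᵢ−xⱼ‖² for all i,j, and Σ_{i<j} ‖h(xᵢ)−h(xⱼ)‖ ≥ (1/sr(M)) Σ_{i<j} ‖xᵢ−xⱼ‖², where sr(M) = ‖M‖_F²/‖M‖₂². -/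
open Matrix
open scoped Matrix.Norms.L2Operator

/-!
Polarising the `ℓ₂²` triangle inequalities gives `|⟪xᵢ - xⱼ, xₖ - xₗ⟫| ≤ ‖xₖ - xₗ‖²`. Hence for a
fixed difference vector `v = x_a - x_b`, the map `x ↦ ⟪v, x⟫`, realised on the line through `v`,
is an `ℓ₂² → ℓ₂` contraction. By the Schur test, `‖M‖₂²` is at most the largest absolute row sum
`∑_q |⟪v, x_q.1 - x_q.2⟫|` of the Gram matrix `MᵀM`, and for the maximising column `v` this is
exactly the total `ℓ₂` length of the image. Finally `‖M‖₂² = ‖M‖_F² / sr(M)`.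
-/

section Dot

variable {m : Type*} [Fintype m]

lemma two_mul_dotProduct_sub_sub {R : Type*} [CommRing R] (a b c e : m → R) :
    2 * ((a - b) ⬝ᵥ (c - e)) =
      (a - e) ⬝ᵥ (a - e) + (b - c) ⬝ᵥ (b - c) - (a - c) ⬝ᵥ (a - c) - (b - e) ⬝ᵥ (b - e) := by
  simp only [dotProduct, Pi.sub_apply, Finset.mul_sum, ← Finset.sum_sub_distrib,
    ← Finset.sum_add_distrib]
  exact Finset.sum_congr rfl fun _ _ => by ring

lemma dotProduct_self_nonneg {R : Type*} [Ring R] [LinearOrder R] [IsStrictOrderedRing R]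
    (v : m → R) : 0 ≤ v ⬝ᵥ v :=
  Fintype.sum_nonneg fun i => mul_self_nonneg (v i)

lemma sqrt_dotProduct_self_smul (c : ℝ) (v : m → ℝ) :
    √((c • v) ⬝ᵥ (c • v)) = |c| * √(v ⬝ᵥ v) := by
  rw [smul_dotProduct, dotProduct_smul, smul_eq_mul, smul_eq_mul, ← mul_assoc,
    Real.sqrt_mul (mul_self_nonneg c), Real.sqrt_mul_self_eq_abs]

-- The junk value `0 / 0 = 0` makes this hold for `v = 0` too.
lemma sqrt_dotProduct_self_smul_div_sqrt (v w : m → ℝ) :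
    √(((v ⬝ᵥ w / √(v ⬝ᵥ v)) • v) ⬝ᵥ ((v ⬝ᵥ w / √(v ⬝ᵥ v)) • v)) = |v ⬝ᵥ w| := by
  rw [sqrt_dotProduct_self_smul, abs_div, abs_of_nonneg (Real.sqrt_nonneg _)]
  rcases eq_or_ne v 0 with rfl | hv
  · simp
  · exact div_mul_cancel₀ _
      ((Real.sqrt_eq_zero (dotProduct_self_nonneg v)).not.2 (dotProduct_self_eq_zero.not.2 hv))

end Dot

lemma abs_dotProduct_sub_le_of_sq_triangle {ι m : Type*} [Fintype m] {x : ι → m → ℝ}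
    (htri : ∀ i j k, (x i - x j) ⬝ᵥ (x i - x j) + (x j - x k) ⬝ᵥ (x j - x k) ≥
      (x i - x k) ⬝ᵥ (x i - x k)) (i j k l : ι) :
    |(x i - x j) ⬝ᵥ (x k - x l)| ≤ (x k - x l) ⬝ᵥ (x k - x l) := by
  have hpol := two_mul_dotProduct_sub_sub (x i) (x j) (x k) (x l)
  have hsymm : (x l - x k) ⬝ᵥ (x l - x k) = (x k - x l) ⬝ᵥ (x k - x l) := by
    rw [← neg_sub, neg_dotProduct_neg]
  have := htri i k l; have := htri j l k; have := htri i l k; have := htri j k l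
  rw [abs_le]
  constructor <;> linarith

section Schur

variable {m n : Type*} [Fintype m] [Fintype n]

lemma dotProduct_mulVec_le_sum_sq_mul_sum_abs {G : Matrix n n ℝ} (hG : G.IsSymm) (y : n → ℝ) :
    y ⬝ᵥ (G *ᵥ y) ≤ ∑ j, y j ^ 2 * ∑ k, |G j k| := by
  have hterm : ∀ j k, y j * (G j k * y k) ≤ |G j k| * (y j ^ 2 / 2) + |G j k| * (y k ^ 2 / 2) := by
    intro j k
    have hamgm : |y j * y k| ≤ y j ^ 2 / 2 + y k ^ 2 / 2 := by
      rw [abs_mul]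
      nlinarith [sq_nonneg (|y j| - |y k|), sq_abs (y j), sq_abs (y k)]
    calc y j * (G j k * y k) = G j k * (y j * y k) := by ring
      _ ≤ |G j k| * |y j * y k| := by rw [← abs_mul]; exact le_abs_self _
      _ ≤ _ := by rw [← mul_add]; gcongr
  have hswap : ∑ j, ∑ k, |G j k| * (y k ^ 2 / 2) = ∑ j, y j ^ 2 / 2 * ∑ k, |G j k| := by
    rw [Finset.sum_comm]
    simp only [Finset.mul_sum, hG.apply]
    exact Finset.sum_congr rfl fun _ _ => Finset.sum_congr rfl fun _ _ => mul_comm _ _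
  calc y ⬝ᵥ (G *ᵥ y) = ∑ j, ∑ k, y j * (G j k * y k) := by
        simp only [dotProduct, mulVec, Finset.mul_sum]
    _ ≤ ∑ j, ∑ k, (|G j k| * (y j ^ 2 / 2) + |G j k| * (y k ^ 2 / 2)) := by gcongr; apply hterm
    _ = ∑ j, y j ^ 2 * ∑ k, |G j k| := by
        simp only [Finset.sum_add_distrib, hswap, ← Finset.sum_mul]
        rw [← Finset.sum_add_distrib]
        exact Finset.sum_congr rfl fun _ _ => by ring

lemma sq_l2_opNorm_le_of_sum_abs_gram_le [DecidableEq n] (A : Matrix m n ℝ) {C : ℝ}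
    (hC : 0 ≤ C) (hrow : ∀ j, ∑ k, |(Aᵀ * A) j k| ≤ C) : ‖A‖ ^ 2 ≤ C := by
  suffices ‖A‖ ≤ √C from (pow_le_pow_left₀ (norm_nonneg A) this 2).trans_eq (Real.sq_sqrt hC)
  rw [l2_opNorm_def]
  refine ContinuousLinearMap.opNorm_le_bound _ (Real.sqrt_nonneg C) fun y => ?_
  refine le_of_pow_le_pow_left₀ two_ne_zero (by positivity) ?_
  rw [mul_pow, Real.sq_sqrt hC, EuclideanSpace.real_norm_sq_eq, EuclideanSpace.real_norm_sq_eq]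
  simp only [LinearEquiv.trans_apply, LinearMap.coe_toContinuousLinearMap', ofLp_toLpLin,
    toLin'_apply]
  calc ∑ t, (A *ᵥ y.ofLp) t ^ 2 = y.ofLp ⬝ᵥ ((Aᵀ * A) *ᵥ y.ofLp) := by
        rw [← mulVec_mulVec, dotProduct_mulVec, vecMul_transpose]
        simp only [dotProduct, sq]
    _ ≤ ∑ j, y.ofLp j ^ 2 * ∑ k, |(Aᵀ * A) j k| :=
        dotProduct_mulVec_le_sum_sq_mul_sum_abs
          (by rw [IsSymm, transpose_mul, transpose_transpose]) _
    _ ≤ C * ∑ j, y.ofLp j ^ 2 := by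
        rw [Finset.mul_sum]
        exact Finset.sum_le_sum fun j _ => by rw [mul_comm C]; gcongr; exact hrow j

lemma exists_sq_l2_opNorm_le_sum_abs_gram [DecidableEq n] [Nonempty n] (A : Matrix m n ℝ) :
    ∃ j, ‖A‖ ^ 2 ≤ ∑ k, |(Aᵀ * A) j k| := by
  obtain ⟨j, hj⟩ := Finite.exists_max fun j => ∑ k, |(Aᵀ * A) j k|
  exact ⟨j, sq_l2_opNorm_le_of_sum_abs_gram_le A
    (Finset.sum_nonneg fun _ _ => abs_nonneg _) hj⟩

end Schur

/-- Main theorem: points satisfying ℓ₂² triangle inequalities admit an ℓ₂²→ℓ₂ contraction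
with average distortion at most the stable rank `sr(M) = ‖M‖_F²/‖M‖₂²` of the
difference matrix `M`. -/
theorem stmt13 (n d : ℕ) (x : Fin n → Fin d → ℝ)
    (htri : ∀ i j k, (x i - x j) ⬝ᵥ (x i - x j) + (x j - x k) ⬝ᵥ (x j - x k) ≥
      (x i - x k) ⬝ᵥ (x i - x k))
    (M : Matrix (Fin d) {q : Fin n × Fin n // q.1 < q.2} ℝ)
    (hM : ∀ q t, M t q = x q.1.1 t - x q.1.2 t)
    (srM : ℝ) (hsr : srM = (∑ t, ∑ q, M t q ^ 2) / ‖M‖ ^ 2) :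
    ∃ h : Fin n → Fin d → ℝ,
      (∀ i j, Real.sqrt ((h i - h j) ⬝ᵥ (h i - h j)) ≤ (x i - x j) ⬝ᵥ (x i - x j)) ∧
      ∑ q : {q : Fin n × Fin n // q.1 < q.2},
          Real.sqrt ((h q.1.1 - h q.1.2) ⬝ᵥ (h q.1.1 - h q.1.2)) ≥
        (1 / srM) * ∑ q : {q : Fin n × Fin n // q.1 < q.2},
          (x q.1.1 - x q.1.2) ⬝ᵥ (x q.1.1 - x q.1.2) := by
  rcases isEmpty_or_nonempty {q : Fin n × Fin n // q.1 < q.2} with hQ | hQ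
  · exact ⟨0, fun i j => by simpa using dotProduct_self_nonneg (x i - x j), by simp⟩
  have hcol : ∀ q, (fun t => M t q) = x q.1.1 - x q.1.2 := fun q => funext (hM q)
  have hgram : ∀ q q', (Mᵀ * M) q q' = (x q.1.1 - x q.1.2) ⬝ᵥ (x q'.1.1 - x q'.1.2) := by
    intro q q'
    rw [mul_apply', ← hcol, ← hcol]
    rfl
  have hfrob : ∑ q : {q : Fin n × Fin n // q.1 < q.2},
      (x q.1.1 - x q.1.2) ⬝ᵥ (x q.1.1 - x q.1.2) = ∑ t, ∑ q, M t q ^ 2 := by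
    rw [Finset.sum_comm]
    simp only [← hcol, dotProduct, sq]
  obtain ⟨q₀, hq₀⟩ := exists_sq_l2_opNorm_le_sum_abs_gram M
  set v := x q₀.1.1 - x q₀.1.2
  set h : Fin n → Fin d → ℝ := fun m => (v ⬝ᵥ x m / √(v ⬝ᵥ v)) • v
  have hproj : ∀ i j, √((h i - h j) ⬝ᵥ (h i - h j)) = |v ⬝ᵥ (x i - x j)| := fun i j => by
    rw [← sub_smul, ← sub_div, ← dotProduct_sub, sqrt_dotProduct_self_smul_div_sqrt]
  refine ⟨h, fun i j => ?_, ?_⟩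
  · rw [hproj]
    exact abs_dotProduct_sub_le_of_sq_triangle htri _ _ _ _
  · rw [hfrob, hsr, one_div_div, ge_iff_le]
    calc ‖M‖ ^ 2 / (∑ t, ∑ q, M t q ^ 2) * (∑ t, ∑ q, M t q ^ 2) ≤ ‖M‖ ^ 2 := by
          rcases eq_or_ne (∑ t, ∑ q, M t q ^ 2) 0 with h0 | h0
          · simp [h0]
          · rw [div_mul_cancel₀ _ h0]
      _ ≤ ∑ q, |(Mᵀ * M) q₀ q| := hq₀
      _ = _ := by simp only [hproj, hgram, v]
end

section
/- Let x₁,…,xₙ ∈ ℝᵈ satisfy the ℓ₂² triangle inequalities, let d_{kl} ≥ 0 be demand weights not all zero, and let v ∈ ℝ^{C(n,2)} with Σ_{k<l} v_{kl}(xₖ−xₗ) = σu for a unit vector u ∈ ℝᵈ and σ > 0. Then the map g(xᵢ) = (σ/‖v‖₁)⟨xᵢ,u⟩ satisfies |g(xᵢ)−g(xⱼ)| ≤ ‖xᵢ−xⱼ‖² for all i,j. -/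
open Matrix

lemma dot_polar {d : ℕ} (a b c e : Fin d → ℝ) :
    2 * ((a - b) ⬝ᵥ (c - e)) =
      (a - e) ⬝ᵥ (a - e) + (b - c) ⬝ᵥ (b - c)
        - (a - c) ⬝ᵥ (a - c) - (b - e) ⬝ᵥ (b - e) := by
  simp only [dotProduct, Pi.sub_apply, Finset.mul_sum, ← Finset.sum_add_distrib,
    ← Finset.sum_sub_distrib]
  apply Finset.sum_congr rfl
  intro k _
  ring

lemma dotProduct_sum' {ι : Type*} {d : ℕ} (s : Finset ι) (w : Fin d → ℝ)
    (f : ι → Fin d → ℝ) :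
    w ⬝ᵥ (∑ q ∈ s, f q) = ∑ q ∈ s, w ⬝ᵥ f q := by
  simp only [dotProduct, Finset.sum_apply, Finset.mul_sum]
  rw [Finset.sum_comm]

lemma dot_sym {d : ℕ} (a b : Fin d → ℝ) :
    (a - b) ⬝ᵥ (a - b) = (b - a) ⬝ᵥ (b - a) := by
  have : b - a = -(a - b) := by ring
  rw [this, neg_dotProduct, dotProduct_neg, neg_neg]

/-- Contraction of the demand-weighted one-dimensional embedding: if
`Σ_{k<l} v_{kl}(xₖ−xₗ) = σu` with `u` a unit vector and `σ > 0`, then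
`g(xᵢ) = (σ/‖v‖₁)⟨xᵢ,u⟩` satisfies `|g(xᵢ)−g(xⱼ)| ≤ ‖xᵢ−xⱼ‖²`. -/
theorem stmt16 (n d : ℕ) (x : Fin n → Fin d → ℝ)
    (htri : ∀ i j k, (x i - x j) ⬝ᵥ (x i - x j) + (x j - x k) ⬝ᵥ (x j - x k) ≥
      (x i - x k) ⬝ᵥ (x i - x k))
    (dem : {q : Fin n × Fin n // q.1 < q.2} → ℝ) (hdem : ∀ q, 0 ≤ dem q)
    (hdne : ∃ q, dem q ≠ 0)
    (v : {q : Fin n × Fin n // q.1 < q.2} → ℝ) (u : Fin d → ℝ) (σ : ℝ)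
    (hu : u ⬝ᵥ u = 1) (hσ : 0 < σ)
    (hcomb : ∑ q : {q : Fin n × Fin n // q.1 < q.2},
      v q • (x q.1.1 - x q.1.2) = σ • u) :
    ∀ i j, |(σ / ∑ q, |v q|) * ((x i) ⬝ᵥ u) - (σ / ∑ q, |v q|) * ((x j) ⬝ᵥ u)| ≤
      (x i - x j) ⬝ᵥ (x i - x j) := by
  -- key lemma
  have key : ∀ i j k l, |(x i - x j) ⬝ᵥ (x k - x l)| ≤ (x i - x j) ⬝ᵥ (x i - x j) := by
    intro i j k l
    rw [abs_le]
    constructor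
    · have hp := dot_polar (x i) (x j) (x l) (x k)
      have h1 := htri i j k
      have h2 := htri j i l
      have hs := dot_sym (x i) (x j)
      have hflip : (x i - x j) ⬝ᵥ (x l - x k) = -((x i - x j) ⬝ᵥ (x k - x l)) := by
        have : x l - x k = -(x k - x l) := by ring
        rw [this, dotProduct_neg]
      linarith
    · have hp := dot_polar (x i) (x j) (x k) (x l)
      have h1 := htri i j l
      have h2 := htri j i k
      have hs := dot_sym (x i) (x j)
      linarith
  intro i j
  set S := ∑ q, |v q| with hS
  set N := (x i - x j) ⬝ᵥ (x i - x j) with hN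
  have hNnn : 0 ≤ N := by
    have := key i j i j
    exact (abs_nonneg _).trans this
  have hSpos : 0 < S := by
    rcases lt_or_eq_of_le (Finset.sum_nonneg (fun q _ => abs_nonneg (v q))) with h | h
    · exact h
    · exfalso
      have hv0 : ∀ q : {q : Fin n × Fin n // q.1 < q.2}, v q = 0 := by
        intro q
        have := (Finset.sum_eq_zero_iff_of_nonneg
          (fun q _ => abs_nonneg (v q))).mp h.symm q (Finset.mem_univ q)
        exact abs_eq_zero.mp this
      have : (0 : Fin d → ℝ) = σ • u := by
        rw [← hcomb]
        simp [hv0]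
      have h2 : (0 : Fin d → ℝ) ⬝ᵥ u = (σ • u) ⬝ᵥ u := by rw [this]
      rw [zero_dotProduct, smul_dotProduct, hu, smul_eq_mul, mul_one] at h2
      linarith
  -- main bound: σ * |(x i - x j) ⬝ᵥ u| ≤ S * N
  have hdot : σ * ((x i - x j) ⬝ᵥ u) =
      ∑ q : {q : Fin n × Fin n // q.1 < q.2}, v q * ((x i - x j) ⬝ᵥ (x q.1.1 - x q.1.2)) := by
    have : (x i - x j) ⬝ᵥ (σ • u) = (x i - x j) ⬝ᵥ
        (∑ q : {q : Fin n × Fin n // q.1 < q.2}, v q • (x q.1.1 - x q.1.2)) := by rw [hcomb]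
    rw [dotProduct_smul, dotProduct_sum'] at this
    simp only [dotProduct_smul, smul_eq_mul] at this
    exact this
  have hbound : σ * |(x i - x j) ⬝ᵥ u| ≤ S * N := by
    rw [← abs_of_pos hσ, ← abs_mul, hdot]
    calc |∑ q : {q : Fin n × Fin n // q.1 < q.2},
            v q * ((x i - x j) ⬝ᵥ (x q.1.1 - x q.1.2))|
        ≤ ∑ q : {q : Fin n × Fin n // q.1 < q.2},
            |v q * ((x i - x j) ⬝ᵥ (x q.1.1 - x q.1.2))| := Finset.abs_sum_le_sum_abs _ _
      _ ≤ ∑ q : {q : Fin n × Fin n // q.1 < q.2}, |v q| * N := by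
          apply Finset.sum_le_sum
          intro q _
          rw [abs_mul]
          exact mul_le_mul_of_nonneg_left (key i j q.1.1 q.1.2) (abs_nonneg _)
      _ = S * N := by rw [← Finset.sum_mul]
  have hsub : (x i) ⬝ᵥ u - (x j) ⬝ᵥ u = (x i - x j) ⬝ᵥ u := by
    rw [sub_dotProduct]
  rw [← mul_sub, abs_mul, hsub, abs_of_pos (div_pos hσ hSpos), div_mul_eq_mul_div,
    div_le_iff₀ hSpos]
  calc σ * |(x i - x j) ⬝ᵥ u| ≤ S * N := hbound
    _ = N * S := by ring
end

section
/- Let x₁,…,xₙ ∈ ℝᵈ satisfy the ℓ₂² triangle inequalities, and let P = Σ_{k<l} p_{kl}(xₖ−xₗ)(xₖ−xₗ)ᵀ for a probability distribution p. Then for all i,j: (xᵢ−xⱼ)ᵀ P (xᵢ−xⱼ) ≤ ‖xᵢ−xⱼ‖⁴. -/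
open Matrix

theorem stmt18 (n d : ℕ) (x : Fin n → Fin d → ℝ)
    (htri : ∀ i j k, (x i - x j) ⬝ᵥ (x i - x j) + (x j - x k) ⬝ᵥ (x j - x k) ≥
      (x i - x k) ⬝ᵥ (x i - x k))
    (p : Fin n → Fin n → ℝ) (hp : ∀ k l, 0 ≤ p k l)
    (hpsum : ∑ q : {q : Fin n × Fin n // q.1 < q.2}, p q.1.1 q.1.2 = 1)
    (P : Matrix (Fin d) (Fin d) ℝ)
    (hPdef : P = ∑ q : {q : Fin n × Fin n // q.1 < q.2},
      p q.1.1 q.1.2 • vecMulVec (x q.1.1 - x q.1.2) (x q.1.1 - x q.1.2)) :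
    ∀ i j, (x i - x j) ⬝ᵥ P.mulVec (x i - x j) ≤ ((x i - x j) ⬝ᵥ (x i - x j)) ^ 2 := by
  intro i j
  have expand : ∀ a b c e : Fin n, (x a - x b) ⬝ᵥ (x c - x e)
      = x a ⬝ᵥ x c - x a ⬝ᵥ x e - x b ⬝ᵥ x c + x b ⬝ᵥ x e := by
    intro a b c e
    simp [sub_dotProduct, dotProduct_sub]; ring
  have comm : ∀ a b : Fin n, x a ⬝ᵥ x b = x b ⬝ᵥ x a := fun a b => dotProduct_comm _ _
  have key : ∀ k l : Fin n, ((x i - x j) ⬝ᵥ (x k - x l)) ^ 2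
      ≤ ((x i - x j) ⬝ᵥ (x i - x j)) ^ 2 := by
    intro k l
    have h1 := htri i j l
    have h2 := htri j i k
    have h3 := htri i j k
    have h4 := htri j i l
    simp only [expand] at h1 h2 h3 h4 ⊢
    apply sq_le_sq'
    · nlinarith [comm i j, comm i k, comm i l, comm j k, comm j l, comm k l]
    · nlinarith [comm i j, comm i k, comm i l, comm j k, comm j l, comm k l]
  set u := x i - x j with hu
  have S_nonneg : (0:ℝ) ≤ u ⬝ᵥ u :=
    Finset.sum_nonneg fun a _ => mul_self_nonneg (u a)
  rw [hPdef]
  have hquad : u ⬝ᵥ (∑ q : {q : Fin n × Fin n // q.1 < q.2},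
      p q.1.1 q.1.2 • vecMulVec (x q.1.1 - x q.1.2) (x q.1.1 - x q.1.2)) *ᵥ u
      = ∑ q : {q : Fin n × Fin n // q.1 < q.2},
        p q.1.1 q.1.2 * (u ⬝ᵥ (x q.1.1 - x q.1.2)) ^ 2 := by
    simp only [Matrix.mulVec, dotProduct, Finset.sum_apply, Matrix.sum_apply, Matrix.smul_apply,
      vecMulVec_apply, smul_eq_mul, Finset.mul_sum, Finset.sum_mul]
    rw [Finset.sum_congr rfl fun a _ => Finset.sum_comm, Finset.sum_comm]
    refine Finset.sum_congr rfl fun q _ => ?_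
    rw [sq, Finset.sum_mul_sum]
    simp only [Finset.mul_sum, Finset.sum_mul]
    refine Finset.sum_congr rfl fun a _ => Finset.sum_congr rfl fun b _ => ?_
    ring
  rw [hquad]
  calc ∑ q : {q : Fin n × Fin n // q.1 < q.2},
        p q.1.1 q.1.2 * (u ⬝ᵥ (x q.1.1 - x q.1.2)) ^ 2
      ≤ ∑ q : {q : Fin n × Fin n // q.1 < q.2},
        p q.1.1 q.1.2 * (u ⬝ᵥ u) ^ 2 := by
        apply Finset.sum_le_sum
        intro q _
        exact mul_le_mul_of_nonneg_left (key q.1.1 q.1.2) (hp q.1.1 q.1.2)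
    _ = (u ⬝ᵥ u) ^ 2 := by rw [← Finset.sum_mul, hpsum, one_mul]
end
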